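/- arXiv:2601.03312 — 9 statements merged into one kernel-verified Lean document; each statement's English description precedes it below -/
import Mathlib

section
/- Let (S,+) be a commutative monoid and let α be an automorphism of (S,+) with α² = id. Define a new binary operation on S by a·b := α(a) + b. Then (S,·) satisfies the left invertive law: (x·y)·z = (z·y)·x for all x, y, z ∈ S. -/
/-- If (S,+) is a commutative monoid and α an automorphism with α² = id,
then the product a·b := α(a) + b satisfies the left invertive law. -/
theorem stmt_0 {S : Type*} [AddCommMonoid S] (α : S ≃+ S) (hα : ∀ x, α (α x) = x)
    (mul : S → S → S) (hmul : ∀ a b, mul a b = α a + b) :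
    ∀ x y z : S, mul (mul x y) z = mul (mul z y) x := by
  intro x y z
  simp only [hmul, map_add, hα]
  abel
end

section
/- Let (S,·) be an AG-monoid with left identity 0. Define x + y := (x·0)·y. Then + is commutative: x + y = y + x for all x, y ∈ S. -/
/-- In an AG-monoid with left identity 0, the addition x + y := (x·0)·y
is commutative. -/
theorem stmt_5 {S : Type*} (mul : S → S → S)
    (hli : ∀ x y z, mul (mul x y) z = mul (mul z y) x)
    (z0 : S) (hz0 : ∀ x, mul z0 x = x)
    (add : S → S → S) (hadd : ∀ x y, add x y = mul (mul x z0) y) :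
    ∀ x y : S, add x y = add y x := by
  intro x y
  rw [hadd, hadd, hli]
end

section
/- Let (S,·) be an AG-monoid with left identity 0. Define x + y := (x·0)·y. Then + is associative: (x + y) + z = x + (y + z) for all x, y, z ∈ S. -/
/-- In an AG-monoid with left identity 0, the addition x + y := (x·0)·y
is associative. -/
theorem stmt_6 {S : Type*} (mul : S → S → S)
    (hli : ∀ x y z, mul (mul x y) z = mul (mul z y) x)
    (z0 : S) (hz0 : ∀ x, mul z0 x = x)
    (add : S → S → S) (hadd : ∀ x y, add x y = mul (mul x z0) y) :
    ∀ x y z : S, add (add x y) z = add x (add y z) := by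
  -- medial law
  have med : ∀ a b c d, mul (mul a b) (mul c d) = mul (mul a c) (mul b d) := by
    intro a b c d
    rw [hli, hli c d b, hli]
  -- swap law: a(bc) = b(ac)
  have swap : ∀ a b c, mul a (mul b c) = mul b (mul a c) := by
    intro a b c
    calc mul a (mul b c) = mul (mul z0 a) (mul b c) := by rw [hz0]
      _ = mul (mul z0 b) (mul a c) := by rw [med]
      _ = mul b (mul a c) := by rw [hz0]
  intro x y z
  simp only [hadd]
  rw [hli (mul x z0) y z0, hz0, hli, hli y z0 z, med, hz0, swap]
end

section
/- Let (S,·) be an AG-monoid with left identity 0 and define x + y := (x·0)·y. Then (S,+) is a commutative monoid with identity element 0. -/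
/-- In an AG-monoid with left identity 0, x + y := (x·0)·y makes (S,+)
a commutative monoid with identity 0. -/
theorem stmt_7 {S : Type*} (mul : S → S → S)
    (hli : ∀ x y z, mul (mul x y) z = mul (mul z y) x)
    (z0 : S) (hz0 : ∀ x, mul z0 x = x)
    (add : S → S → S) (hadd : ∀ x y, add x y = mul (mul x z0) y) :
    (∀ x y : S, add x y = add y x) ∧
    (∀ x y z : S, add (add x y) z = add x (add y z)) ∧
    (∀ x : S, add z0 x = x) ∧ (∀ x : S, add x z0 = x) := by
  have medial : ∀ a b c d, mul (mul a b) (mul c d) = mul (mul a c) (mul b d) := by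
    intro a b c d
    calc mul (mul a b) (mul c d) = mul (mul (mul c d) b) a := hli _ _ _
      _ = mul (mul (mul b d) c) a := by rw [hli c d b]
      _ = mul (mul a c) (mul b d) := by rw [hli (mul b d) c a]
  have comm : ∀ x y, add x y = add y x := by
    intro x y; rw [hadd, hadd, hli x z0 y]
  have lid : ∀ x, add z0 x = x := by
    intro x; rw [hadd, hz0 z0, hz0]
  refine ⟨comm, ?_, lid, fun x => (comm x z0).trans (lid x)⟩
  intro x y z
  rw [hadd, hadd, hadd, hadd]
  calc mul (mul (mul (mul x z0) y) z0) z
      = mul (mul (mul z0 y) (mul x z0)) z := by rw [hli (mul x z0) y z0]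
    _ = mul (mul (mul z0 x) (mul y z0)) z := by rw [medial z0 y x z0]
    _ = mul (mul x (mul y z0)) z := by rw [hz0 x]
    _ = mul (mul x (mul y z0)) (mul z0 z) := by rw [hz0 z]
    _ = mul (mul x z0) (mul (mul y z0) z) := by rw [medial x (mul y z0) z0 z]
end

section
/- Let (S,·) be an AG-monoid with left identity 0, define x + y := (x·0)·y and α(x) := x·0. Then α is an automorphism of the commutative monoid (S,+): α is bijective and α(x + y) = α(x) + α(y) for all x, y. -/
/-- In an AG-monoid with left identity 0, α(x) := x·0 is an automorphism
of the commutative monoid (S, +) where x + y := (x·0)·y: it is bijective and additive. -/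
theorem stmt_9 {S : Type*} (mul : S → S → S)
    (hli : ∀ x y z, mul (mul x y) z = mul (mul z y) x)
    (z0 : S) (hz0 : ∀ x, mul z0 x = x)
    (add : S → S → S) (hadd : ∀ x y, add x y = mul (mul x z0) y)
    (α : S → S) (hα : ∀ x, α x = mul x z0) :
    Function.Bijective α ∧ ∀ x y : S, α (add x y) = add (α x) (α y) := by
  have hinv : ∀ x, mul (mul x z0) z0 = x := fun x => by
    rw [hli, hz0, hz0]
  have hswap : ∀ x y, mul y (mul x z0) = mul x (mul y z0) := fun x y =>
    calc mul y (mul x z0) = mul (mul z0 y) (mul x z0) := by rw [hz0]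
      _ = mul (mul (mul x z0) y) z0 := by rw [hli]
      _ = mul (mul (mul y z0) x) z0 := by rw [hli x z0 y]
      _ = mul (mul z0 x) (mul y z0) := by rw [hli]
      _ = mul x (mul y z0) := by rw [hz0]
  constructor
  · exact Function.Involutive.bijective (fun x => by rw [hα, hα, hinv])
  · intro x y
    calc α (add x y) = mul (mul (mul x z0) y) z0 := by rw [hadd, hα]
      _ = mul (mul z0 y) (mul x z0) := by rw [hli]
      _ = mul y (mul x z0) := by rw [hz0]
      _ = mul x (mul y z0) := hswap x y
      _ = mul (mul (mul x z0) z0) (mul y z0) := by rw [hinv]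
      _ = add (α x) (α y) := by rw [hadd, hα, hα]
end

section
/- Let (S,+) and (S',+) be commutative monoids with involutive automorphisms α and α' respectively, and let (S,·), (S',·) be the AG-monoids defined by x·y = α(x)+y and x·y = α'(x)+y. If φ : S → S' is an isomorphism of the magmas (S,·) and (S',·), then φ is an isomorphism of the monoids (S,+) and (S',+) and φ∘α = α'∘φ. -/
/-- A magma isomorphism between the AG-monoids built from (S,+,α) and
(S',+,α') is a monoid isomorphism of (S,+) onto (S',+) intertwining α and α'. -/
theorem stmt_12 {S S' : Type*} [AddCommMonoid S] [AddCommMonoid S']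
    (α : S ≃+ S) (hα : ∀ x, α (α x) = x)
    (α' : S' ≃+ S') (hα' : ∀ x, α' (α' x) = x)
    (mul : S → S → S) (hmul : ∀ a b, mul a b = α a + b)
    (mul' : S' → S' → S') (hmul' : ∀ a b, mul' a b = α' a + b)
    (φ : S → S') (hbij : Function.Bijective φ)
    (hhom : ∀ x y, φ (mul x y) = mul' (φ x) (φ y)) :
    (∀ x y : S, φ (x + y) = φ x + φ y) ∧ φ 0 = 0 ∧ ∀ x, φ (α x) = α' (φ x) := by
  have key : ∀ x y, φ (α x + y) = α' (φ x) + φ y := by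
    intro x y
    have := hhom x y
    rwa [hmul, hmul'] at this
  have h0 : φ 0 = 0 := by
    have h1 : ∀ y, φ y = α' (φ 0) + φ y := by
      intro y
      have := key 0 y
      simpa using this
    have h2 : α' (φ 0) = 0 := by
      obtain ⟨y, hy⟩ := hbij.surjective 0
      have := (h1 y).symm
      rw [hy] at this
      simpa using this
    have := hα' (φ 0)
    rw [h2] at this
    simpa using this.symm
  have hcomm : ∀ x, φ (α x) = α' (φ x) := by
    intro x
    have := key x 0
    simpa [h0] using this
  refine ⟨fun x y => ?_, h0, hcomm⟩
  have := key (α x) y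
  rw [hα, hcomm, hα'] at this
  exact this
end

section
/- Let (S,+) be a commutative monoid and let α, α' be involutive automorphisms of (S,+). The AG-monoids (S,·_α) and (S,·_{α'}) defined by x·_α y = α(x)+y and x·_{α'} y = α'(x)+y are isomorphic as magmas if and only if α and α' are conjugate in the automorphism group Aut(S,+), i.e., there exists an automorphism ψ of (S,+) with ψ∘α∘ψ⁻¹ = α'. -/
/-- The AG-monoids built from involutive automorphisms α, α' of a
commutative monoid (S,+) are isomorphic as magmas iff α and α' are conjugate
in Aut(S,+). -/
theorem stmt_14 {S : Type*} [AddCommMonoid S]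
    (α : S ≃+ S) (hα : ∀ x, α (α x) = x)
    (α' : S ≃+ S) (hα' : ∀ x, α' (α' x) = x)
    (mulα : S → S → S) (hmulα : ∀ a b, mulα a b = α a + b)
    (mulα' : S → S → S) (hmulα' : ∀ a b, mulα' a b = α' a + b) :
    (∃ φ : S → S, Function.Bijective φ ∧
        ∀ x y, φ (mulα x y) = mulα' (φ x) (φ y)) ↔
    (∃ ψ : S ≃+ S, ∀ x, ψ (α (ψ.symm x)) = α' x) := by
  constructor
  · rintro ⟨φ, hbij, hhom⟩
    have key : ∀ x y, φ (α x + y) = α' (φ x) + φ y := by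
      intro x y; have := hhom x y; rwa [hmulα, hmulα'] at this
    -- φ 0 = 0
    have h0' : ∀ y, α' (φ 0) + φ y = φ y := by
      intro y
      have := key 0 y
      simpa using this.symm
    have hφ0 : α' (φ 0) = 0 := by
      obtain ⟨z, hz⟩ := hbij.2 0
      have := h0' z
      rw [hz] at this
      simpa using this
    have hφ00 : φ 0 = 0 := by
      have := congrArg α' hφ0
      rw [hα'] at this
      simpa using this
    have hconj : ∀ x, φ (α x) = α' (φ x) := by
      intro x
      have := key x 0
      simpa [hφ00] using this
    have hadd : ∀ x y, φ (x + y) = φ x + φ y := by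
      intro x y
      have := key (α x) y
      rwa [hα, hconj, hα'] at this
    let f : S →+ S := { toFun := φ, map_zero' := hφ00, map_add' := hadd }
    let ψ := AddEquiv.ofBijective f hbij
    refine ⟨ψ, fun x => ?_⟩
    have : ψ (α (ψ.symm x)) = α' (ψ (ψ.symm x)) := hconj _
    rwa [ψ.apply_symm_apply] at this
  · rintro ⟨ψ, hψ⟩
    refine ⟨ψ, ψ.bijective, fun x y => ?_⟩
    rw [hmulα, hmulα', map_add]
    congr 1
    have := hψ (ψ x)
    rwa [ψ.symm_apply_apply] at this
end

section
/- An AG-monoid (S,·) is associative if and only if it is commutative (x·y = y·x for all x, y). -/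
/-- An AG-monoid is associative iff it is commutative. -/
theorem stmt_16 {S : Type*} (mul : S → S → S)
    (hli : ∀ x y z, mul (mul x y) z = mul (mul z y) x)
    (z0 : S) (hz0 : ∀ x, mul z0 x = x) :
    (∀ x y z : S, mul (mul x y) z = mul x (mul y z)) ↔
    (∀ x y : S, mul x y = mul y x) := by
  constructor
  · intro ha
    have hr : ∀ x, mul x z0 = x := by
      intro x
      have h1 : mul (mul x z0) z0 = x := by
        rw [hli, hz0, hz0]
      have h2 : mul (mul x z0) z0 = mul x z0 := by
        rw [ha, hz0]
      rw [h2] at h1; exact h1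
    intro x y
    calc mul x y = mul (mul z0 x) y := by rw [hz0]
      _ = mul (mul y x) z0 := hli _ _ _
      _ = mul y (mul x z0) := ha _ _ _
      _ = mul y x := by rw [hr]
  · intro hc x y z
    calc mul (mul x y) z = mul (mul z y) x := hli _ _ _
      _ = mul x (mul z y) := hc _ _
      _ = mul x (mul y z) := by rw [hc z y]
end

section
/- An AG-monoid (S,·) with left identity 0 is associative if and only if 0 is a two-sided identity, i.e., x·0 = x for all x. -/
/-- An AG-monoid with left identity 0 is associative iff 0 is a
two-sided identity. -/
theorem stmt_17 {S : Type*} (mul : S → S → S)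
    (hli : ∀ x y z, mul (mul x y) z = mul (mul z y) x)
    (z0 : S) (hz0 : ∀ x, mul z0 x = x) :
    (∀ x y z : S, mul (mul x y) z = mul x (mul y z)) ↔
    (∀ x : S, mul x z0 = x) := by
  constructor
  · intro ha x
    have comm : ∀ a b, mul a b = mul b a := by
      intro a b
      have h := hli a z0 b
      rw [ha a z0 b, ha b z0 a, hz0, hz0] at h
      exact h
    rw [comm, hz0]
  · intro hr x y z
    have comm : ∀ a b, mul a b = mul b a := by
      intro a b
      have h := hli z0 a b
      rw [hz0, hr] at h
      exact h
    rw [hli, comm (mul z y) x, comm z y]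
end
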